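/- Fix a real k > −1 and let F_k(r) := r·J_k(r)/J_{k+1}(r). If z > 0 and J_{k+1}(z) = 0, then F_k(r) tends to −∞ as r tends to z from the left, and F_k(r) tends to +∞ as r tends to z from the right. -/

import Mathlib

open Real

/-- Bessel function of the first kind of real order `k`, defined by its power series
(valid for `r > 0`, using real powers). -/
noncomputable def besselJ (k r : ℝ) : ℝ :=
  ∑' m : ℕ, ((-1 : ℝ) ^ m / (m.factorial * Real.Gamma (m + k + 1))) * (r / 2) ^ ((2 * m : ℝ) + k)

/-!
Write `J_k(r) = (r/2)^k g_k((r/2)^2)` with the entire series `g_k(q) = ∑ c_k(m) q^m`. Termwise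
differentiation gives `g_k' = -g_{k+1}`, and `c_k(m) = (m + k + 1) c_{k+1}(m)` gives
`g_k = (k+1) g_{k+1} - q g_{k+2}`; hence `J_k' = (k/r) J_k - J_{k+1}` and
`J_{k+1}' = J_k - ((k+1)/r) J_{k+1}`. If `J_k` and `J_{k+1}` both vanished at `z`, the energy
`E = J_k² + J_{k+1}²`, whose derivative `(2k/x) J_k² - (2(k+1)/x) J_{k+1}²` has no cross term,
would satisfy `E' ≥ -K E` on `[x₀, z]`, so `E(x₀) ≤ E(z) e^{K(z - x₀)} = 0`; this fails for `x₀`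
close to `0`, where `J_{k+1} > 0`. So `J_{k+1}'(z) = J_k(z) ≠ 0`: the zero `z` is simple and
`r J_k(r) / J_{k+1}(r)` behaves like `z / (r - z)` near `z`.
-/

open Filter Topology Set
open scoped Nat

section PowerSeries

variable {a : ℕ → ℝ} {C : ℝ}

theorem summable_mul_pow_of_abs_le_div_factorial (ha : ∀ m, |a m| ≤ C / m !) (x : ℝ) :
    Summable fun m => a m * x ^ m := by
  refine .of_norm_bounded ((Real.summable_pow_div_factorial |x|).mul_left C) fun m => ?_
  calc ‖a m * x ^ m‖ = |a m| * |x| ^ m := by rw [Real.norm_eq_abs, abs_mul, abs_pow]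
    _ ≤ C / m ! * |x| ^ m := by gcongr; exact ha m
    _ = C * (|x| ^ m / m !) := by ring

theorem norm_mul_natCast_mul_pow_sub_one_le (ha : ∀ m, |a m| ≤ C / m !) {R y : ℝ}
    (hR : 1 ≤ R) (hy : |y| ≤ R) (m : ℕ) :
    ‖a m * (m * y ^ (m - 1))‖ ≤ C * ((2 * R) ^ m / m !) := by
  have hC : 0 ≤ C := by simpa using (abs_nonneg _).trans (ha 0)
  have hm : (m : ℝ) ≤ 2 ^ m := by exact_mod_cast Nat.lt_two_pow_self.le
  have hy' : |y| ^ (m - 1) ≤ R ^ m :=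
    (pow_le_pow_left₀ (abs_nonneg y) hy _).trans (pow_le_pow_right₀ hR (Nat.sub_le m 1))
  calc ‖a m * (m * y ^ (m - 1))‖ = |a m| * (m * |y| ^ (m - 1)) := by
        rw [Real.norm_eq_abs, abs_mul, abs_mul, abs_pow, Nat.abs_cast]
    _ ≤ C / m ! * (2 ^ m * R ^ m) := by gcongr; exact ha m
    _ = C * ((2 * R) ^ m / m !) := by ring

theorem summable_mul_natCast_mul_pow_sub_one (ha : ∀ m, |a m| ≤ C / m !) (x : ℝ) :
    Summable fun m => a m * (m * x ^ (m - 1)) :=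
  .of_norm_bounded ((Real.summable_pow_div_factorial (2 * (|x| + 1))).mul_left C)
    (norm_mul_natCast_mul_pow_sub_one_le ha (by linarith [abs_nonneg x]) (by linarith))

theorem hasDerivAt_tsum_mul_pow (ha : ∀ m, |a m| ≤ C / m !) (x : ℝ) :
    HasDerivAt (fun y => ∑' m, a m * y ^ m) (∑' m, a m * (m * x ^ (m - 1))) x := by
  set R := |x| + 1
  have hx : x ∈ Ioo (-R) R := abs_lt.mp (by linarith)
  exact hasDerivAt_tsum_of_isPreconnected
    ((Real.summable_pow_div_factorial (2 * R)).mul_left C) isOpen_Ioo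
    (convex_Ioo (-R) R).isPreconnected (fun m y _ => (hasDerivAt_pow m y).const_mul (a m))
    (fun m y hy => norm_mul_natCast_mul_pow_sub_one_le ha (by linarith [abs_nonneg x])
      (abs_le.mpr ⟨hy.1.le, hy.2.le⟩) m)
    hx (summable_mul_pow_of_abs_le_div_factorial ha x) hx

end PowerSeries

theorem Gamma_le_Gamma_add_natCast {s : ℝ} (hs : 1 ≤ s) (n : ℕ) : Gamma s ≤ Gamma (s + n) := by
  induction n with
  | zero => simp
  | succ n ih =>
    have hsn : 1 ≤ s + n := by linarith [n.cast_nonneg (α := ℝ)]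
    calc Gamma s ≤ Gamma (s + n) := ih
      _ ≤ (s + n) * Gamma (s + n) :=
        le_mul_of_one_le_left (Gamma_pos_of_pos (by linarith)).le hsn
      _ = Gamma (s + (n + 1 : ℕ)) := by
        rw [Nat.cast_succ, ← add_assoc, Gamma_add_one (by linarith)]

theorem le_mul_exp_of_hasDerivAt_of_neg_mul_le {f f' : ℝ → ℝ} {K a b : ℝ} (hab : a ≤ b)
    (hf : ∀ x ∈ Icc a b, HasDerivAt f (f' x) x) (hf' : ∀ x ∈ Icc a b, -K * f x ≤ f' x) :
    f a ≤ f b * exp (K * (b - a)) := by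
  have hg : ∀ x ∈ Icc a b,
      HasDerivAt (fun x => f x * exp (K * x)) ((f' x + K * f x) * exp (K * x)) x :=
    fun x hx => ((hf x hx).mul ((hasDerivAt_id x).const_mul K).exp).congr_deriv
      (by simp only [id_eq, mul_one]; ring)
  have hmono : MonotoneOn (fun x => f x * exp (K * x)) (Icc a b) :=
    monotoneOn_of_hasDerivWithinAt_nonneg (convex_Icc a b)
      (fun x hx => (hg x hx).continuousAt.continuousWithinAt)
      (fun x hx => (hg x (interior_subset hx)).hasDerivWithinAt)
      (fun x hx => mul_nonneg (by linarith [hf' x (interior_subset hx)]) (exp_pos _).le)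
  calc f a = f a * exp (K * a) / exp (K * a) := by field_simp
    _ ≤ f b * exp (K * b) / exp (K * a) :=
      div_le_div_of_nonneg_right (hmono (left_mem_Icc.2 hab) (right_mem_Icc.2 hab) hab)
        (exp_pos _).le
    _ = f b * exp (K * (b - a)) := by rw [mul_div_assoc, ← exp_sub, mul_sub]

section OneSidedLimits

variable {f g : ℝ → ℝ} {a z : ℝ}

theorem tendsto_div_mul_sub_of_hasDerivAt (hf : HasDerivAt f a z) (hfz : f z = 0) (ha : a ≠ 0)
    (hg : ContinuousAt g z) : Tendsto (fun r => g r / f r * (r - z)) (𝓝[≠] z) (𝓝 (g z / a)) :=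
  ((hg.tendsto.mono_left nhdsWithin_le_nhds).div (hasDerivAt_iff_tendsto_slope.1 hf) ha).congr
    fun r => by
      rw [Pi.div_apply, slope_def_field, hfz, sub_zero, div_div_eq_mul_div, mul_div_right_comm]

theorem tendsto_div_nhdsGT_atTop_of_hasDerivAt (hf : HasDerivAt f a z) (hfz : f z = 0)
    (hg : ContinuousAt g z) (hpos : 0 < g z / a) :
    Tendsto (fun r => g r / f r) (𝓝[>] z) atTop := by
  have ha : a ≠ 0 := by rintro rfl; simp at hpos
  have hinv : Tendsto (fun r => (r - z)⁻¹) (𝓝[>] z) atTop :=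
    tendsto_inv_nhdsGT_zero.comp (by simpa using tendsto_map (f := (· - z)) (x := 𝓝[>] z))
  refine (((tendsto_div_mul_sub_of_hasDerivAt hf hfz ha hg).mono_left
    (nhdsGT_le_nhdsNE z)).pos_mul_atTop hpos hinv).congr' ?_
  filter_upwards [self_mem_nhdsWithin] with r hr
  exact mul_inv_cancel_right₀ (sub_ne_zero.2 (ne_of_gt hr)) _

theorem tendsto_div_nhdsLT_atBot_of_hasDerivAt (hf : HasDerivAt f a z) (hfz : f z = 0)
    (hg : ContinuousAt g z) (hpos : 0 < g z / a) :
    Tendsto (fun r => g r / f r) (𝓝[<] z) atBot := by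
  have ha : a ≠ 0 := by rintro rfl; simp at hpos
  have hinv : Tendsto (fun r => (r - z)⁻¹) (𝓝[<] z) atBot :=
    tendsto_inv_nhdsLT_zero.comp (by simpa using tendsto_map (f := (· - z)) (x := 𝓝[<] z))
  refine (((tendsto_div_mul_sub_of_hasDerivAt hf hfz ha hg).mono_left
    (nhdsLT_le_nhdsNE z)).pos_mul_atBot hpos hinv).congr' ?_
  filter_upwards [self_mem_nhdsWithin] with r hr
  exact mul_inv_cancel_right₀ (sub_ne_zero.2 (ne_of_lt hr)) _

end OneSidedLimits

theorem hasDerivAt_half_rpow_mul_comp_half_sq {G : ℝ → ℝ} {G' k r : ℝ} (hr : 0 < r)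
    (hG : HasDerivAt G G' ((r / 2) ^ 2)) :
    HasDerivAt (fun x => (x / 2) ^ k * G ((x / 2) ^ 2))
      ((r / 2) ^ k * (k / r * G ((r / 2) ^ 2) + r / 2 * G')) r := by
  have hhalf := (hasDerivAt_id r).div_const 2
  refine ((hhalf.rpow_const (p := k) (Or.inl (half_pos hr).ne')).mul
    (hG.comp r (hhalf.pow 2))).congr_deriv ?_
  simp only [id, Function.comp_apply, Pi.pow_apply]
  rw [rpow_sub_one (by positivity)]
  field_simp
  ring

noncomputable def besselCoeff (k : ℝ) (m : ℕ) : ℝ := (-1) ^ m / (m ! * Gamma (m + k + 1))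

noncomputable def besselSeries (k q : ℝ) : ℝ := ∑' m, besselCoeff k m * q ^ m

section Bessel

variable {k : ℝ}

theorem Gamma_natCast_add_add_one_pos (hk : -1 < k) (m : ℕ) : 0 < Gamma (m + k + 1) :=
  Gamma_pos_of_pos (by linarith [m.cast_nonneg (α := ℝ)])

theorem exists_abs_besselCoeff_le (hk : -1 < k) : ∃ C, ∀ m, |besselCoeff k m| ≤ C / m ! := by
  refine ⟨1 / Gamma (k + 1) + 1 / Gamma (k + 2), fun m => ?_⟩
  have hΓ₁ := Gamma_pos_of_pos (show 0 < k + 1 by linarith)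
  have hΓ₂ := Gamma_pos_of_pos (show 0 < k + 2 by linarith)
  have hΓ := Gamma_natCast_add_add_one_pos hk m
  have hinv : 1 / Gamma (m + k + 1) ≤ 1 / Gamma (k + 1) + 1 / Gamma (k + 2) := by
    cases m with
    | zero => simpa using (by positivity : 0 ≤ (Gamma (k + 2))⁻¹)
    | succ n =>
      have : Gamma (k + 2) ≤ Gamma (↑(n + 1) + k + 1) := by
        convert Gamma_le_Gamma_add_natCast (s := k + 2) (by linarith) n using 2
        push_cast; ring
      calc 1 / Gamma (↑(n + 1) + k + 1) ≤ 1 / Gamma (k + 2) := by gcongr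
        _ ≤ _ := le_add_of_nonneg_left (by positivity)
  calc |besselCoeff k m| = 1 / Gamma (m + k + 1) / m ! := by
        rw [besselCoeff, abs_div, abs_pow, abs_neg, abs_one, one_pow,
          abs_of_pos (by positivity), div_div, mul_comm]
    _ ≤ _ := by gcongr

theorem natCast_add_one_mul_besselCoeff_succ (m : ℕ) :
    (m + 1) * besselCoeff k (m + 1) = -besselCoeff (k + 1) m := by
  have h : (↑(m + 1) + k + 1 : ℝ) = m + (k + 1) + 1 := by push_cast; ring
  rw [besselCoeff, besselCoeff, h, Nat.factorial_succ, pow_succ]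
  push_cast
  field_simp

theorem besselCoeff_eq_mul_besselCoeff_add_one (hk : -1 < k) (m : ℕ) :
    besselCoeff k m = (m + k + 1) * besselCoeff (k + 1) m := by
  have hpos : 0 < (m : ℝ) + k + 1 := by linarith [m.cast_nonneg (α := ℝ)]
  have hΓ := Gamma_natCast_add_add_one_pos hk m
  rw [besselCoeff, besselCoeff, show (m : ℝ) + (k + 1) + 1 = m + k + 1 + 1 by ring,
    Gamma_add_one hpos.ne']
  field_simp

theorem hasSum_besselSeries (hk : -1 < k) (q : ℝ) :
    HasSum (fun m => besselCoeff k m * q ^ m) (besselSeries k q) :=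
  have ⟨_, hC⟩ := exists_abs_besselCoeff_le hk
  (summable_mul_pow_of_abs_le_div_factorial hC q).hasSum

theorem hasSum_besselCoeff_mul_natCast_mul_pow_sub_one (hk : -1 < k) (q : ℝ) :
    HasSum (fun m => besselCoeff k m * (m * q ^ (m - 1))) (-besselSeries (k + 1) q) := by
  rw [← hasSum_nat_add_iff' 1]
  convert (hasSum_besselSeries (k := k + 1) (by linarith) q).neg using 1
  · ext m
    rw [neg_mul_eq_neg_mul, ← natCast_add_one_mul_besselCoeff_succ, Nat.add_sub_cancel]
    push_cast
    ring
  · simp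

theorem hasDerivAt_besselSeries (hk : -1 < k) (q : ℝ) :
    HasDerivAt (besselSeries k) (-besselSeries (k + 1) q) q := by
  obtain ⟨C, hC⟩ := exists_abs_besselCoeff_le hk
  rw [← (hasSum_besselCoeff_mul_natCast_mul_pow_sub_one hk q).tsum_eq]
  exact hasDerivAt_tsum_mul_pow hC q

theorem besselSeries_eq_sub (hk : -1 < k) (q : ℝ) :
    besselSeries k q = (k + 1) * besselSeries (k + 1) q - q * besselSeries (k + 2) q := by
  have hk₁ : -1 < k + 1 := by linarith
  have h := ((hasSum_besselSeries hk₁ q).mul_left (k + 1)).add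
    ((hasSum_besselCoeff_mul_natCast_mul_pow_sub_one hk₁ q).mul_left q)
  rw [show k + 1 + 1 = k + 2 by ring, mul_neg, ← sub_eq_add_neg] at h
  refine (hasSum_besselSeries hk q).unique (h.congr_fun fun m => ?_)
  rw [besselCoeff_eq_mul_besselCoeff_add_one hk]
  rcases m with _ | m
  · simp
  · simp only [Nat.add_sub_cancel, pow_succ]
    push_cast
    ring

theorem besselSeries_zero : besselSeries k 0 = 1 / Gamma (k + 1) := by
  rw [besselSeries, tsum_eq_single 0 fun m hm => by simp [hm]]
  simp [besselCoeff]

theorem besselJ_eq_rpow_mul_besselSeries {r : ℝ} (hr : 0 < r) :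
    besselJ k r = (r / 2) ^ k * besselSeries k ((r / 2) ^ 2) := by
  rw [besselJ, besselSeries, ← tsum_mul_left]
  refine tsum_congr fun m => ?_
  rw [rpow_add (by positivity), show (2 * m : ℝ) = (2 * m : ℕ) by push_cast; rfl, rpow_natCast,
    pow_mul, besselCoeff]
  ring

theorem besselJ_eventuallyEq {r : ℝ} (hr : 0 < r) :
    besselJ k =ᶠ[𝓝 r] fun x => (x / 2) ^ k * besselSeries k ((x / 2) ^ 2) :=
  (eventually_gt_nhds hr).mono fun _ hx => besselJ_eq_rpow_mul_besselSeries hx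

theorem hasDerivAt_besselJ (hk : -1 < k) {r : ℝ} (hr : 0 < r) :
    HasDerivAt (besselJ k) (k / r * besselJ k r - besselJ (k + 1) r) r := by
  refine ((hasDerivAt_half_rpow_mul_comp_half_sq hr
    (hasDerivAt_besselSeries hk _)).congr_of_eventuallyEq (besselJ_eventuallyEq hr)).congr_deriv ?_
  rw [besselJ_eq_rpow_mul_besselSeries hr, besselJ_eq_rpow_mul_besselSeries hr,
    rpow_add_one (by positivity)]
  ring

theorem hasDerivAt_besselJ_add_one (hk : -1 < k) {r : ℝ} (hr : 0 < r) :
    HasDerivAt (besselJ (k + 1)) (besselJ k r - (k + 1) / r * besselJ (k + 1) r) r := by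
  refine ((hasDerivAt_half_rpow_mul_comp_half_sq hr
    (hasDerivAt_besselSeries (k := k + 1) (by linarith) _)).congr_of_eventuallyEq
    (besselJ_eventuallyEq hr)).congr_deriv ?_
  rw [besselJ_eq_rpow_mul_besselSeries hr, besselJ_eq_rpow_mul_besselSeries hr,
    besselSeries_eq_sub hk, rpow_add_one (by positivity), show k + 1 + 1 = k + 2 by ring]
  field_simp
  ring

theorem eventually_pos_besselJ (hk : -1 < k) : ∀ᶠ r in 𝓝[>] 0, 0 < besselJ k r := by
  have h₀ : 0 < besselSeries k 0 := by
    rw [besselSeries_zero]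
    have := Gamma_pos_of_pos (show 0 < k + 1 by linarith)
    positivity
  have hq : Tendsto (fun r : ℝ => (r / 2) ^ 2) (𝓝[>] 0) (𝓝 0) := by
    have : Continuous fun r : ℝ => (r / 2) ^ 2 := by fun_prop
    simpa using (this.tendsto 0).mono_left nhdsWithin_le_nhds
  filter_upwards [hq.eventually ((hasDerivAt_besselSeries hk 0).continuousAt.eventually
    (eventually_gt_nhds h₀)), self_mem_nhdsWithin] with r hseries hr
  rw [besselJ_eq_rpow_mul_besselSeries hr]
  exact mul_pos (rpow_pos_of_pos (half_pos hr) k) hseries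

theorem besselJ_ne_zero_of_besselJ_add_one_eq_zero (hk : -1 < k) {z : ℝ} (hz : 0 < z)
    (h : besselJ (k + 1) z = 0) : besselJ k z ≠ 0 := by
  intro h0
  obtain ⟨x₀, hpos, hx₀⟩ :=
    ((eventually_pos_besselJ (k := k + 1) (by linarith)).and (Ioo_mem_nhdsGT hz)).exists
  let S x := besselJ k x ^ 2 + besselJ (k + 1) x ^ 2
  let S' x := 2 * (k / x) * besselJ k x ^ 2 - 2 * ((k + 1) / x) * besselJ (k + 1) x ^ 2
  have hS : ∀ x ∈ Icc x₀ z, HasDerivAt S (S' x) x := fun x hx => by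
    have hx : 0 < x := hx₀.1.trans_le hx.1
    refine (((hasDerivAt_besselJ hk hx).pow 2).add
      ((hasDerivAt_besselJ_add_one hk hx).pow 2)).congr_deriv ?_
    simp only [S']
    field_simp
    ring
  have hS' : ∀ x ∈ Icc x₀ z, -(2 * (|k| / x₀ + (k + 1) / x₀)) * S x ≤ S' x := fun x hx => by
    have hxpos : 0 < x := hx₀.1.trans_le hx.1
    have h₁ : 0 ≤ k / x + |k| / x₀ := by
      have habs := div_le_div_of_nonneg_left (abs_nonneg k) hx₀.1 hx.1
      have hneg := div_le_div_of_nonneg_right (neg_abs_le k) hxpos.le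
      rw [neg_div] at hneg
      linarith
    have h₂ : (k + 1) / x ≤ (k + 1) / x₀ := div_le_div_of_nonneg_left (by linarith) hx₀.1 hx.1
    have h₃ : 0 ≤ (k + 1) / x₀ := div_nonneg (by linarith) hx₀.1.le
    have h₄ : 0 ≤ |k| / x₀ := div_nonneg (abs_nonneg k) hx₀.1.le
    nlinarith [mul_nonneg (add_nonneg h₁ h₃) (sq_nonneg (besselJ k x)),
      mul_nonneg (add_nonneg h₄ (sub_nonneg.2 h₂)) (sq_nonneg (besselJ (k + 1) x))]
  have hle := le_mul_exp_of_hasDerivAt_of_neg_mul_le hx₀.2.le hS hS'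
  have hSz : S z = 0 := by simp only [S, h, h0]; norm_num
  have hSx₀ : 0 < S x₀ := add_pos_of_nonneg_of_pos (sq_nonneg _) (pow_pos hpos 2)
  rw [hSz, zero_mul] at hle
  linarith

end Bessel

/-- At each positive zero `z` of `J_{k+1}`, `F_k` tends to `-∞` from the left and to `+∞`
from the right. -/
theorem besselJ_ratio_tendsto_at_zero (k : ℝ) (hk : -1 < k) (z : ℝ) (hz : 0 < z)
    (h : besselJ (k + 1) z = 0) :
    Filter.Tendsto (fun r => r * besselJ k r / besselJ (k + 1) r)
      (nhdsWithin z (Set.Iio z)) Filter.atBot ∧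
    Filter.Tendsto (fun r => r * besselJ k r / besselJ (k + 1) r)
      (nhdsWithin z (Set.Ioi z)) Filter.atTop := by
  have hJ : besselJ k z ≠ 0 := besselJ_ne_zero_of_besselJ_add_one_eq_zero hk hz h
  have hf : HasDerivAt (besselJ (k + 1)) (besselJ k z) z := by
    simpa [h] using hasDerivAt_besselJ_add_one hk hz
  have hg : ContinuousAt (fun r => r * besselJ k r) z :=
    continuousAt_id.mul (hasDerivAt_besselJ hk hz).continuousAt
  have hpos : 0 < z * besselJ k z / besselJ k z := by rwa [mul_div_cancel_right₀ _ hJ]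
  exact ⟨tendsto_div_nhdsLT_atBot_of_hasDerivAt hf h hg hpos,
    tendsto_div_nhdsGT_atTop_of_hasDerivAt hf h hg hpos⟩
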